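/- arXiv:1502.08025 — 6 statements merged into one kernel-verified Lean document; each statement's English description precedes it below -/
import Mathlib

section
/- For a partition λ of n other than the single row (n), with last row of length k and ν the partition of n−k obtained from λ by removing its last row, every partition μ of n such that the Littlewood–Richardson coefficient c^μ_{(k),ν} is nonzero (i.e. every partition μ obtained from ν by adding k boxes, no two in the same column) satisfies Σ_{b∈μ} ct(b) ≥ Σ_{b∈λ} ct(b), with equality only if μ = λ. -/
/-- `l` is a partition of `n`: a weakly decreasing list of positive integers with sum `n`. -/
def PaperIsPartition (l : List ℕ) (n : ℕ) : Prop :=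
  l.Pairwise (· ≥ ·) ∧ (∀ x ∈ l, 0 < x) ∧ l.sum = n

/-- Sum of contents `i - j` over all boxes (row `j`, column `i`, 0-indexed) of the
Young diagram of `l`. -/
def contentSum (l : List ℕ) : ℤ :=
  ∑ i ∈ Finset.range l.length, ∑ j ∈ Finset.range (l.getD i 0), ((j : ℤ) - (i : ℤ))

/-- `μ` is obtained from `ν` by adding `k` boxes, no two in the same column
(a horizontal strip of size `k`); by the Pieri rule this is equivalent to
`c^μ_{(k),ν} ≠ 0`. -/
def HStrip (ν μ : List ℕ) (k : ℕ) : Prop :=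
  (∀ i, ν.getD i 0 ≤ μ.getD i 0) ∧ (∀ i, μ.getD (i + 1) 0 ≤ ν.getD i 0) ∧
    μ.sum = ν.sum + k


/-- sum of a list of naturals as a sum of `getD` over a large enough range -/
lemma sum_getD_range (l : List ℕ) (N : ℕ) (h : l.length ≤ N) :
    ∑ i ∈ Finset.range N, l.getD i 0 = l.sum := by
  induction l generalizing N with
  | nil => simp
  | cons a t ih =>
    cases N with
    | zero => simp at h
    | succ N =>
      rw [Finset.sum_range_succ'] -- splits off i = 0
      simp only [List.getD_cons_succ, List.getD_cons_zero, List.sum_cons]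
      rw [ih N (by simpa using Nat.succ_le_succ_iff.mp h)]
      ring

lemma contentSum_ext (l : List ℕ) (N : ℕ) (h : l.length ≤ N) :
    (∑ i ∈ Finset.range l.length, ∑ j ∈ Finset.range (l.getD i 0), ((j : ℤ) - (i : ℤ)))
      = ∑ i ∈ Finset.range N, ∑ j ∈ Finset.range (l.getD i 0), ((j : ℤ) - (i : ℤ)) := by
  apply Finset.sum_subset
  · exact Finset.range_subset_range.mpr h
  · intro i _ hi
    rw [List.getD_eq_default _ _ (by simpa using hi)]
    simp

lemma eq_of_getD (l1 l2 : List ℕ) (h1 : ∀ x ∈ l1, 0 < x) (h2 : ∀ x ∈ l2, 0 < x)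
    (h : ∀ i, l1.getD i 0 = l2.getD i 0) : l1 = l2 := by
  induction l1 generalizing l2 with
  | nil =>
    cases l2 with
    | nil => rfl
    | cons b t =>
      have := h 0
      simp at this
      have := h2 b (by simp)
      omega
  | cons a t ih =>
    cases l2 with
    | nil =>
      have := h 0
      simp at this
      have := h1 a (by simp)
      omega
    | cons b s =>
      have h0 := h 0
      simp only [List.getD_cons_zero] at h0
      subst h0
      have := ih s (fun x hx => h1 x (by simp [hx])) (fun x hx => h2 x (by simp [hx]))
        (fun i => by simpa using h (i + 1))
      rw [this]


/-- number of boxes added in rows `i..r` -/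
def Sf (nu m : ℕ → ℕ) (r i : ℕ) : ℕ := ∑ t ∈ Finset.Ico i (r + 1), (m t - nu t)

/-- content sum of boxes added in rows `i..r` -/
def Cf (nu m : ℕ → ℕ) (r i : ℕ) : ℤ :=
  ∑ t ∈ Finset.Ico i (r + 1), ∑ j ∈ Finset.Ico (nu t) (m t), ((j : ℤ) - (t : ℤ))

/-- content sum of `s` boxes placed at the start of row `r` -/
def Bf (r s : ℕ) : ℤ := ∑ j ∈ Finset.range s, ((j : ℤ) - (r : ℤ))

lemma shifted_sum_le (a b c : ℕ) (z : ℤ) (hab : a ≤ b) :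
    ∑ j ∈ Finset.Ico a (a + c), ((j : ℤ) + z) ≤ ∑ j ∈ Finset.Ico b (b + c), ((j : ℤ) + z) := by
  rw [Finset.sum_Ico_eq_sum_range, Finset.sum_Ico_eq_sum_range]
  simp only [Nat.add_sub_cancel_left]
  apply Finset.sum_le_sum
  intro j _
  push_cast
  omega

lemma core (nu m : ℕ → ℕ) (r : ℕ) (h1 : ∀ i, nu i ≤ m i) (h2 : ∀ i, m (i + 1) ≤ nu i)
    (hnu : ∀ i, r ≤ i → nu i = 0) :
    ∀ d, d ≤ r + 1 →
      Sf nu m r (r + 1 - d) ≤ m (r + 1 - d) ∧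
      Bf r (Sf nu m r (r + 1 - d)) ≤ Cf nu m r (r + 1 - d) ∧
      (Cf nu m r (r + 1 - d) = Bf r (Sf nu m r (r + 1 - d)) →
        ∀ t, r + 1 - d ≤ t → t < r → m t = nu t) := by
  intro d
  induction d with
  | zero =>
    intro _
    simp only [Nat.sub_zero]
    constructor
    · simp [Sf]
    constructor
    · simp [Sf, Cf, Bf]
    · intro _ t ht1 ht2; omega
  | succ d ih =>
    intro hd
    have hdr : d ≤ r + 1 := by omega
    obtain ⟨ihS, ihB, ihE⟩ := ih hdr
    set i : ℕ := r + 1 - (d + 1) with hi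
    have hi1 : r + 1 - d = i + 1 := by omega
    have hir : i ≤ r := by omega
    rw [hi1] at ihS ihB ihE
    have hilt : i < r + 1 := by omega
    -- split off row i
    have hSsplit : Sf nu m r i = (m i - nu i) + Sf nu m r (i + 1) := by
      rw [Sf, Finset.sum_eq_sum_Ico_succ_bot hilt]; rfl
    have hCsplit : Cf nu m r i
        = (∑ j ∈ Finset.Ico (nu i) (m i), ((j : ℤ) - (i : ℤ))) + Cf nu m r (i + 1) := by
      rw [Cf, Finset.sum_eq_sum_Ico_succ_bot hilt]; rfl
    have hSm : Sf nu m r (i + 1) ≤ nu i := le_trans ihS (h2 i)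
    have hS1 : Sf nu m r i ≤ m i := by have := h1 i; omega
    -- the B-difference
    have hSle : Sf nu m r (i + 1) ≤ Sf nu m r i := by omega
    have hBsplit : Bf r (Sf nu m r i) = Bf r (Sf nu m r (i + 1))
        + ∑ j ∈ Finset.Ico (Sf nu m r (i + 1)) (Sf nu m r i), ((j : ℤ) - (r : ℤ)) := by
      rw [Bf, Bf, Finset.range_eq_Ico, Finset.range_eq_Ico]
      exact (Finset.sum_Ico_consecutive (fun j => ((j : ℤ) - (r : ℤ))) (Nat.zero_le _) hSle).symm
    have hSi : Sf nu m r i = Sf nu m r (i + 1) + (m i - nu i) := by omega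
    have hD : ∑ j ∈ Finset.Ico (Sf nu m r (i + 1)) (Sf nu m r i), ((j : ℤ) - (r : ℤ))
        ≤ ∑ j ∈ Finset.Ico (nu i) (m i), ((j : ℤ) - (r : ℤ)) := by
      have hmi : m i = nu i + (m i - nu i) := by have := h1 i; omega
      calc ∑ j ∈ Finset.Ico (Sf nu m r (i + 1)) (Sf nu m r i), ((j : ℤ) - (r : ℤ))
          = ∑ j ∈ Finset.Ico (Sf nu m r (i + 1)) (Sf nu m r (i + 1) + (m i - nu i)),
              ((j : ℤ) + (-(r : ℤ))) := by rw [← hSi]; simp [sub_eq_add_neg]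
        _ ≤ ∑ j ∈ Finset.Ico (nu i) (nu i + (m i - nu i)), ((j : ℤ) + (-(r : ℤ))) :=
              shifted_sum_le _ _ _ _ hSm
        _ = ∑ j ∈ Finset.Ico (nu i) (m i), ((j : ℤ) - (r : ℤ)) := by
              rw [← hmi]; simp [sub_eq_add_neg]
    have hRow : ∑ j ∈ Finset.Ico (nu i) (m i), ((j : ℤ) - (r : ℤ))
        ≤ ∑ j ∈ Finset.Ico (nu i) (m i), ((j : ℤ) - (i : ℤ)) := by
      apply Finset.sum_le_sum
      intro j _
      have : (i : ℤ) ≤ (r : ℤ) := by exact_mod_cast hir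
      omega
    refine ⟨hS1, ?_, ?_⟩
    · rw [hCsplit, hBsplit]
      have := le_trans hD hRow
      linarith [ihB]
    · -- equality case
      intro hEq t ht1 ht2
      rw [hCsplit, hBsplit] at hEq
      have hRowEq : ∑ j ∈ Finset.Ico (nu i) (m i), ((j : ℤ) - (i : ℤ))
          = ∑ j ∈ Finset.Ico (Sf nu m r (i + 1)) (Sf nu m r i), ((j : ℤ) - (r : ℤ)) := by
        have := le_trans hD hRow
        linarith [ihB]
      have hCEq : Cf nu m r (i + 1) = Bf r (Sf nu m r (i + 1)) := by
        have := le_trans hD hRow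
        linarith [ihB]
      rcases Nat.eq_or_lt_of_le ht1 with h | h
      · -- t = i : show m i = nu i
        rw [← h]
        have hirlt : i < r := h ▸ ht2
        by_contra hne
        have hlt : nu i < m i := lt_of_le_of_ne (h1 i) (Ne.symm hne)
        have hStrict : ∑ j ∈ Finset.Ico (nu i) (m i), ((j : ℤ) - (r : ℤ))
            < ∑ j ∈ Finset.Ico (nu i) (m i), ((j : ℤ) - (i : ℤ)) := by
          apply Finset.sum_lt_sum_of_nonempty
          · exact Finset.nonempty_Ico.mpr hlt
          · intro j _
            have : (i : ℤ) < (r : ℤ) := by exact_mod_cast hirlt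
            omega
        have := lt_of_le_of_lt hD hStrict
        linarith [ihB]
      · exact ihE hCEq t h ht2

/-- let `λ ≠ (n)` be a partition of `n` with last row of length `k`, and `ν`
the partition of `n - k` obtained by removing the last row.  Then among all partitions `μ`
of `n` obtained from `ν` by adding a horizontal strip of `k` boxes (equivalently, with
`c^μ_{(k),ν} ≠ 0`), the partition `λ` uniquely minimizes the content sum:
`Σ_{b∈μ} ct(b) ≥ Σ_{b∈λ} ct(b)`, with equality only if `μ = λ`. -/
theorem pieri_maximality (n : ℕ) (hn : 1 ≤ n) (lam : List ℕ)
    (hlam : PaperIsPartition lam n) (hne : lam ≠ [n]) :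
    ∀ μ : List ℕ, PaperIsPartition μ n → HStrip lam.dropLast μ (lam.getLastD 0) →
      contentSum lam ≤ contentSum μ ∧ (contentSum μ = contentSum lam → μ = lam) := by
  intro μ hμ hstrip
  obtain ⟨hlsort, hlpos, hlsum⟩ := hlam
  obtain ⟨hμsort, hμpos, hμsum⟩ := hμ
  obtain ⟨h1, h2, h3⟩ := hstrip
  have hlamne : lam ≠ [] := by
    intro h; rw [h] at hlsum; simp at hlsum; omega
  set ν : List ℕ := lam.dropLast with hν
  set k : ℕ := lam.getLastD 0 with hk
  set r : ℕ := ν.length with hr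
  have hlen : lam.length = r + 1 := by
    rw [hr, hν, List.length_dropLast]
    have : 0 < lam.length := List.length_pos_iff.mpr hlamne
    omega
  have hlamdec : ν ++ [k] = lam := by
    rw [hν, hk, List.getLastD_eq_getLast? , List.getLast?_eq_getLast hlamne]
    exact List.dropLast_append_getLast hlamne
  -- getD functions
  set nf : ℕ → ℕ := fun i => ν.getD i 0 with hnf
  set mf : ℕ → ℕ := fun i => μ.getD i 0 with hmf
  have hnf0 : ∀ i, r ≤ i → nf i = 0 := fun i hi => List.getD_eq_default _ _ hi
  have hlamgetD : ∀ i, lam.getD i 0 = if i < r then nf i else if i = r then k else 0 := by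
    intro i
    rw [← hlamdec]
    rcases lt_trichotomy i r with h | h | h
    · rw [List.getD_append _ _ _ _ h, if_pos h]
    · subst h
      rw [List.getD_append_right _ _ _ _ (le_refl _)]
      simp
    · rw [List.getD_eq_default]
      · simp [Nat.lt_asymm h, Nat.ne_of_gt h]
      · simp [hr]; omega
  -- length bound on μ
  have hμlen : μ.length ≤ r + 1 := by
    by_contra hc
    push_neg at hc
    have hmem : μ.getD (r + 1) 0 ∈ μ := by
      rw [List.getD_eq_getElem _ _ hc]
      exact List.getElem_mem _
    have hp := hμpos _ hmem
    have hb := h2 r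
    have h0 : ν.getD r 0 = 0 := List.getD_eq_default _ _ (le_refl r)
    omega
  -- hypotheses of core
  have hcore := core nf mf r h1 h2 hnf0 (r + 1) (le_refl _)
  simp only [Nat.sub_self] at hcore
  obtain ⟨hcS, hcB, hcE⟩ := hcore
  -- S 0 = k
  have hsum_m : ∑ t ∈ Finset.range (r + 1), mf t = μ.sum := sum_getD_range μ (r + 1) hμlen
  have hsum_n : ∑ t ∈ Finset.range (r + 1), nf t = ν.sum :=
    sum_getD_range ν (r + 1) (by omega)
  have hS0 : Sf nf mf r 0 = k := by
    have hadd : Sf nf mf r 0 + ∑ t ∈ Finset.range (r + 1), nf t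
        = ∑ t ∈ Finset.range (r + 1), mf t := by
      rw [Sf, ← Finset.range_eq_Ico, ← Finset.sum_add_distrib]
      exact Finset.sum_congr rfl fun t _ => Nat.sub_add_cancel (h1 t)
    rw [hsum_m, hsum_n, h3] at hadd
    omega
  -- contentSum μ = contentSum ν + Cf
  have hCμ : contentSum μ = contentSum ν + Cf nf mf r 0 := by
    rw [contentSum, contentSum, contentSum_ext μ (r + 1) hμlen,
      contentSum_ext ν (r + 1) (by omega), Cf, ← Finset.range_eq_Ico,
      ← Finset.sum_add_distrib]
    apply Finset.sum_congr rfl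
    intro t _
    rw [Finset.range_eq_Ico, Finset.range_eq_Ico]
    exact (Finset.sum_Ico_consecutive (fun j => ((j : ℤ) - (t : ℤ)))
      (Nat.zero_le (nf t)) (h1 t)).symm
  -- contentSum lam = contentSum ν + Bf r k
  have hClam : contentSum lam = contentSum ν + Bf r k := by
    rw [contentSum, contentSum, hlen, Finset.sum_range_succ, Bf]
    congr 1
    · apply Finset.sum_congr rfl
      intro t ht
      rw [hlamgetD t, if_pos (Finset.mem_range.mp ht)]
    · rw [hlamgetD r]
      simp
  constructor
  · rw [hCμ, hClam]
    have := hcB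
    rw [hS0] at this
    linarith
  · intro hEq
    rw [hCμ, hClam] at hEq
    have hCeq : Cf nf mf r 0 = Bf r (Sf nf mf r 0) := by rw [hS0]; linarith
    have hflat : ∀ t, t < r → mf t = nf t := fun t ht => hcE hCeq t (Nat.zero_le t) ht
    have hmr : mf r = k := by
      have : Sf nf mf r 0 = k := hS0
      rw [Sf, ← Finset.range_eq_Ico, Finset.sum_range_succ] at this
      have hz : ∑ t ∈ Finset.range r, (mf t - nf t) = 0 :=
        Finset.sum_eq_zero fun t ht => by
          rw [hflat t (Finset.mem_range.mp ht)]; omega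
      rw [hz, hnf0 r (le_refl _)] at this
      omega
    apply eq_of_getD μ lam hμpos hlpos
    intro i
    rw [hlamgetD i]
    rcases lt_trichotomy i r with h | h | h
    · rw [if_pos h]; exact hflat i h
    · subst h
      rw [if_neg (lt_irrefl r), if_pos rfl]
      exact hmr
    · rw [if_neg (Nat.lt_asymm h), if_neg (Nat.ne_of_gt h)]
      exact List.getD_eq_default _ _ (by omega)
end

section
/- As an operator on the polynomial ring ℂ[V], the Dunkl operator y satisfies the commutation relation y·f − f·y = ∂_y(f) − Σ_{r∈R} c_r ⟨α_r, y⟩ ((f − r(f))/α_r)·r for every polynomial f ∈ ℂ[V], where the right hand side is a finite sum of operators (multiplication by polynomials composed with group elements). -/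
open MvPolynomial

noncomputable section

/-- Polynomial functions on `V = ℂⁿ`. -/
abbrev Pol (n : ℕ) := MvPolynomial (Fin n) ℂ

/-- The action of `g ∈ GL(n, ℂ)` on polynomials: `(g·f)(v) = f(g⁻¹v)`. -/
def gact {n : ℕ} (g : Matrix.GeneralLinearGroup (Fin n) ℂ) (f : Pol n) : Pol n :=
  aeval (fun i => ∑ j, C (((g⁻¹ : Matrix.GeneralLinearGroup (Fin n) ℂ) :
    Matrix (Fin n) (Fin n) ℂ) i j) * X j) f

/-- The linear form with coefficient vector `a`. -/
def lform {n : ℕ} (a : Fin n → ℂ) : Pol n := ∑ i, C (a i) * X i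

/-- `g` is a reflection: its fixed space in `ℂⁿ` has dimension exactly `n - 1`. -/
def IsLinRefl {n : ℕ} (g : Matrix.GeneralLinearGroup (Fin n) ℂ) : Prop :=
  Module.finrank ℂ
    (LinearMap.ker ((Matrix.mulVecLin (g : Matrix (Fin n) (Fin n) ℂ)) - LinearMap.id))
    = n - 1

/-- The Dunkl operator `y(f) = ∂_y f − Σ_{r∈R} c_r ⟨α_r, y⟩ (f − r f)/α_r`, where
`q r f` stands for the polynomial `(f − r f)/α_r` (see hypothesis `hq` below). -/
def dunkl {n : ℕ} (R : Finset (Matrix.GeneralLinearGroup (Fin n) ℂ))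
    (c : Matrix.GeneralLinearGroup (Fin n) ℂ → ℂ)
    (a : Matrix.GeneralLinearGroup (Fin n) ℂ → Fin n → ℂ)
    (q : Matrix.GeneralLinearGroup (Fin n) ℂ → Pol n → Pol n)
    (y : Fin n → ℂ) (f : Pol n) : Pol n :=
  ∑ i, y i • MvPolynomial.pderiv i f - ∑ r ∈ R, (c r * ∑ i, a r i * y i) • q r f

lemma lform_ne_zero {n : ℕ} {a : Fin n → ℂ} (h : a ≠ 0) : lform a ≠ 0 := by
  obtain ⟨i, hi⟩ := Function.ne_iff.mp h
  intro h0
  have := congrArg (MvPolynomial.eval (Pi.single i 1)) h0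
  simp [lform, MvPolynomial.eval_sum, Pi.single_apply, Finset.sum_ite_eq',
    mul_comm] at this
  exact hi this

lemma gact_mul {n : ℕ} (g : Matrix.GeneralLinearGroup (Fin n) ℂ) (f h : Pol n) :
    gact g (f * h) = gact g f * gact g h := by
  simp [gact, map_mul]

lemma q_mul {n : ℕ} {r : Matrix.GeneralLinearGroup (Fin n) ℂ}
    {a : Fin n → ℂ} {q : Pol n → Pol n}
    (h0 : a ≠ 0) (hq : ∀ f : Pol n, lform a * q f = f - gact r f) (f g : Pol n) :
    q (f * g) = q f * gact r g + f * q g := by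
  have hl : lform a ≠ 0 := lform_ne_zero h0
  apply mul_left_cancel₀ hl
  rw [hq]
  rw [mul_add, ← mul_assoc, hq, mul_left_comm, hq, gact_mul]
  ring

/-- as operators on `ℂ[V]`, the Dunkl operator `y` satisfies the
commutation relation
`y·f − f·y = ∂_y(f) − Σ_{r∈R} c_r ⟨α_r, y⟩ ((f − r f)/α_r)·r`,
i.e. evaluated on any polynomial `g`:
`y(fg) − f·y(g) = ∂_y(f)·g − Σ_{r∈R} c_r ⟨α_r, y⟩ · ((f − r f)/α_r) · r(g)`.
Here `q r f` stands for `(f − r f)/α_r` (hypothesis `hq`). -/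
theorem dunkl_commutation_relation {n : ℕ}
    (G : Subgroup (Matrix.GeneralLinearGroup (Fin n) ℂ)) [Finite G]
    (R : Finset (Matrix.GeneralLinearGroup (Fin n) ℂ))
    (c : Matrix.GeneralLinearGroup (Fin n) ℂ → ℂ)
    (a : Matrix.GeneralLinearGroup (Fin n) ℂ → Fin n → ℂ)
    (q : Matrix.GeneralLinearGroup (Fin n) ℂ → Pol n → Pol n)
    (hRG : ∀ r ∈ R, r ∈ G)
    (hRrefl : ∀ r ∈ R, IsLinRefl r)
    (hRall : ∀ g ∈ G, IsLinRefl g → g ∈ R)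
    (ha : ∀ r ∈ R, ∀ v : Fin n → ℂ,
      ((r : Matrix (Fin n) (Fin n) ℂ).mulVec v = v ↔ ∑ i, a r i * v i = 0))
    (hq : ∀ r ∈ R, ∀ f : Pol n, lform (a r) * q r f = f - gact r f) :
    ∀ (y : Fin n → ℂ) (f g : Pol n),
      dunkl R c a q y (f * g) - f * dunkl R c a q y g
        = (∑ i, y i • MvPolynomial.pderiv i f) * g
          - ∑ r ∈ R, (c r * ∑ i, a r i * y i) • (q r f * gact r g) := by
  intro y f g
  have h1 : ∑ i, y i • MvPolynomial.pderiv i (f * g)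
      = f * ∑ i, y i • MvPolynomial.pderiv i g
        + (∑ i, y i • MvPolynomial.pderiv i f) * g := by
    rw [Finset.mul_sum, Finset.sum_mul, ← Finset.sum_add_distrib]
    refine Finset.sum_congr rfl fun i _ => ?_
    rw [MvPolynomial.pderiv_mul]
    rw [mul_smul_comm, smul_mul_assoc, smul_add]
    ring_nf
  have h2 : ∑ r ∈ R, (c r * ∑ i, a r i * y i) • q r (f * g)
      = ∑ r ∈ R, (c r * ∑ i, a r i * y i) • (q r f * gact r g)
        + f * ∑ r ∈ R, (c r * ∑ i, a r i * y i) • q r g := by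
    rw [Finset.mul_sum, ← Finset.sum_add_distrib]
    refine Finset.sum_congr rfl fun r hr => ?_
    by_cases hs : (∑ i, a r i * y i) = 0
    · simp [hs]
    · have h0 : a r ≠ 0 := by
        intro h; apply hs; simp [h]
      rw [q_mul h0 (hq r hr) f g, smul_add, mul_smul_comm]
  unfold dunkl
  rw [h1, h2]
  ring
end
end

section
/- With notation as in the regular-singular recurrence: suppose additionally h ∈ GL(A) has finite order n, ζ = e^{2πi/n}, and ζ^{−k−1}·h·b_k·h^{−1} = b_k for all k ≥ 0. If h·a_0 = ζ^j·a_0 for some integer j, and h commutes with a, then the recursively defined coefficients satisfy h·a_m = ζ^{m+j}·a_m for all m ≥ 0. -/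
/-- with notation as in the regular-singular recurrence, suppose
`h ∈ GL(A)` has finite order `n`, commutes with `a`, `ζ = e^{2πi/n}`,
`ζ^{−k−1} h b_k h⁻¹ = b_k` for all `k ≥ 0`, and `h a₀ = ζ^j a₀` for some integer `j`.
Then the coefficients defined by the recurrence satisfy `h a_m = ζ^{m+j} a_m` for all
`m ≥ 0`. -/
theorem regular_singular_recursion_equivariance {A : Type*} [AddCommGroup A]
    [Module ℂ A] [FiniteDimensional ℂ A]
    (a : Module.End ℂ A) (b : ℕ → Module.End ℂ A) (γ : ℂ)
    (hno : ∀ m : ℕ, 0 < m → ¬ Module.End.HasEigenvalue a (γ + m))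
    (h : A ≃ₗ[ℂ] A) (n : ℕ) (hn : 0 < n) (horder : orderOf h = n)
    (ζ : ℂ) (hζ : ζ = Complex.exp (2 * Real.pi * Complex.I / n))
    (hcomm : ∀ v : A, h (a v) = a (h v))
    (hb : ∀ (k : ℕ) (v : A), h (b k v) = ζ ^ (k + 1) • b k (h v))
    (j : ℤ) (a0 : A) (ha0 : a a0 = γ • a0) (hha0 : h a0 = ζ ^ j • a0)
    (f : ℕ → A) (hf0 : f 0 = a0)
    (hfrec : ∀ m : ℕ, 0 < m →
      (γ + m) • f m - a (f m) = ∑ k ∈ Finset.range m, b k (f (m - k - 1))) :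
    ∀ m : ℕ, h (f m) = ζ ^ ((m : ℤ) + j) • f m := by
  have hζ0 : ζ ≠ 0 := by rw [hζ]; exact Complex.exp_ne_zero _
  intro m
  induction m using Nat.strong_induction_on with
  | _ m ih =>
    rcases Nat.eq_zero_or_pos m with rfl | hm
    · simpa [hf0] using hha0
    · set c : ℂ := ζ ^ ((m : ℤ) + j) with hc
      -- apply h to the recurrence
      have E := hfrec m hm
      have hhE : (γ + m) • h (f m) - a (h (f m)) = c • ((γ + m) • f m - a (f m)) := by
        have lhs : h ((γ + m) • f m - a (f m)) = (γ + m) • h (f m) - a (h (f m)) := by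
          rw [map_sub, map_smul, hcomm]
        have rhs : h (∑ k ∈ Finset.range m, b k (f (m - k - 1)))
            = c • ∑ k ∈ Finset.range m, b k (f (m - k - 1)) := by
          rw [map_sum, Finset.smul_sum]
          refine Finset.sum_congr rfl fun k hk => ?_
          have hkm : k < m := Finset.mem_range.mp hk
          have hlt : m - k - 1 < m := by omega
          rw [hb, ih _ hlt, map_smul, smul_smul]
          congr 1
          have hcast : ((m - k - 1 : ℕ) : ℤ) = (m : ℤ) - k - 1 := by
            push_cast [Nat.cast_sub (by omega : k + 1 ≤ m)]; omega
          rw [hcast, hc]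
          have : (ζ : ℂ) ^ (k + 1) = ζ ^ ((k : ℤ) + 1) := by
            rw [← zpow_natCast]; push_cast; ring_nf
          rw [this, ← zpow_add₀ hζ0]
          congr 1; ring
        rw [← lhs, E]; exact rhs
      -- the vector g := h (f m) - c • f m is in the kernel of a - (γ+m)
      have key : a (h (f m) - c • f m) = (γ + (m : ℂ)) • (h (f m) - c • f m) := by
        have := hhE
        rw [map_sub, map_smul]
        linear_combination (norm := module) -this
      have hg0 : h (f m) - c • f m = 0 := by
        by_contra hg
        exact hno m hm (Module.End.hasEigenvalue_of_hasEigenvector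
          ⟨(Module.End.mem_eigenspace_iff).2 key, hg⟩)
      have := sub_eq_zero.mp hg0
      exact this
end

section
/- Let G = G(r,1,n) act on ℂ^n, with parameters c_0 (for transposition-type reflections) and c_1, …, c_{r−1} (for diagonal reflections ζ_k^l), and set d_j = Σ_{1≤l≤r−1} ζ^{lj} c_l for 0 ≤ j ≤ r−1 where ζ = e^{2πi/r}. Then for an r-tuple of partitions λ• with n boxes total, the scalar c_{λ•} by which the central element Σ_{r∈R} c_r(1−r) acts on S^{λ•} equals r·C(n,2)·c_0 + n·d_0 − Σ_{b∈λ•}(ct(b)·r·c_0 + d_{β(b)}), where ct(b) is the content of box b and β(b) = k if b lies in the k-th component λ^k. -/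
open Finset

theorem Finset.sum_comp_eq_sum_card_fiber_mul {ι κ R : Type*} [DecidableEq κ] [Semiring R]
    {s : Finset ι} {t : Finset κ} {g : ι → κ} (h : ∀ i ∈ s, g i ∈ t) (f : κ → R) :
    ∑ i ∈ s, f (g i) = ∑ k ∈ t, (#{i ∈ s | g i = k} : R) * f k := by
  rw [← sum_fiberwise_of_maps_to' h]
  simp only [sum_const, nsmul_eq_mul]

namespace Module.End

section

variable {R M : Type*} [CommSemiring R] [AddCommMonoid M] [Module R M]

theorem pow_apply_of_apply_eq_smul {f : End R M} {μ : R} {v : M} (hv : f v = μ • v) (l : ℕ) :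
    (f ^ l) v = μ ^ l • v := by
  induction l with
  | zero => simp
  | succ l ih => rw [pow_succ', mul_apply, ih, map_smul, hv, smul_smul, pow_succ]

theorem sum_apply_of_apply_eq_smul {ι : Type*} {s : Finset ι} {f : ι → End R M} {μ : ι → R}
    {v : M} (hv : ∀ i ∈ s, f i v = μ i • v) :
    (∑ i ∈ s, f i) v = (∑ i ∈ s, μ i) • v := by
  rw [LinearMap.sum_apply, sum_smul]
  exact sum_congr rfl hv

end

theorem sum_smul_one_sub_pow_apply {R M : Type*} [CommRing R] [AddCommGroup M] [Module R M]
    {f : End R M} {μ : R} {v : M} (hv : f v = μ • v) (s : Finset ℕ) (c : ℕ → R) :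
    (∑ l ∈ s, c l • (1 - f ^ l)) v = (∑ l ∈ s, c l * (1 - μ ^ l)) • v := by
  refine sum_apply_of_apply_eq_smul fun l _ => ?_
  rw [LinearMap.smul_apply, LinearMap.sub_apply, one_apply, pow_apply_of_apply_eq_smul hv,
    smul_sub, smul_smul, ← sub_smul, mul_sub, mul_one]

end Module.End

/-- The module `S^{λ•}` and the central element are encoded through Young's orthonormal form:
`v` is a basis vector `v_T` of `S^{λ•}` for a standard tableau `T` recorded by
`cont j = ct(T⁻¹(j+1))` and `beta j = β(T⁻¹(j+1))`; the operators `phi j = φ_{j+1}` and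
`zmat j = ζ_{j+1}` act on `v` as in Young's form (`hphi`, `hzeta`); and `Z` is the expression
of the central element `Σ_{r∈R} c_r(1−r)` in terms of the `φ_j` and `ζ_j` (`hZ`). -/
theorem central_character_Gr1n_general (r n : ℕ)
    (lam : ℕ → List ℕ)
    (c0 : ℂ) (c : ℕ → ℂ)
    (ζ : ℂ)
    (d : ℕ → ℂ) (hd : ∀ j, d j = ∑ l ∈ Finset.Ico 1 r, ζ ^ (l * j) * c l)
    {W : Type*} [AddCommGroup W] [Module ℂ W]
    (v : W)
    (Z : Module.End ℂ W) (phi zmat : Fin n → Module.End ℂ W)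
    (cont : Fin n → ℤ) (beta : Fin n → ℕ)
    (hbeta : ∀ j, beta j < r)
    (hZ : Z = (c0 * r * (n.choose 2 : ℂ)) • (1 : Module.End ℂ W)
        - c0 • ∑ j, phi j
        + ∑ j, ∑ l ∈ Finset.Ico 1 r, c l • ((1 : Module.End ℂ W) - (zmat j) ^ l))
    (hphi : ∀ j, phi j v = ((r : ℂ) * (cont j : ℂ)) • v)
    (hzeta : ∀ j, zmat j v = ζ ^ (beta j) • v)
    (hcont : ∑ j, cont j = ∑ k ∈ Finset.range r, contentSum (lam k))
    (hbe : ∀ k < r, (Finset.univ.filter (fun j => beta j = k)).card = (lam k).sum) :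
    Z v = ((r : ℂ) * (n.choose 2 : ℂ) * c0 + (n : ℂ) * d 0
      - ((∑ k ∈ Finset.range r, (contentSum (lam k) : ℂ)) * (r : ℂ) * c0
         + ∑ k ∈ Finset.range r, ((lam k).sum : ℂ) * d k)) • v := by
  have hdiag : ∀ j ∈ univ,
      (∑ l ∈ Ico 1 r, c l • (1 - zmat j ^ l)) v = (d 0 - d (beta j)) • v := by
    intro j _
    rw [Module.End.sum_smul_one_sub_pow_apply (hzeta j), hd 0, hd (beta j), ← sum_sub_distrib]
    refine congrArg (· • v) (sum_congr rfl fun l _ => ?_)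
    ring
  have hfib : ∑ j, d (beta j) = ∑ k ∈ range r, ((lam k).sum : ℂ) * d k := by
    rw [sum_comp_eq_sum_card_fiber_mul fun j _ => mem_range.2 (hbeta j)]
    exact sum_congr rfl fun k hk => by rw [hbe k (mem_range.1 hk)]
  have hc : ∑ j, (cont j : ℂ) = ∑ k ∈ range r, (contentSum (lam k) : ℂ) := by
    exact_mod_cast hcont
  rw [hZ, LinearMap.add_apply, LinearMap.sub_apply, LinearMap.smul_apply, Module.End.one_apply,
    LinearMap.smul_apply, Module.End.sum_apply_of_apply_eq_smul fun j _ => hphi j,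
    Module.End.sum_apply_of_apply_eq_smul hdiag, sum_sub_distrib, hfib, ← mul_sum, hc,
    smul_smul, ← sub_smul, ← add_smul]
  simp only [sum_const, card_univ, Fintype.card_fin, nsmul_eq_mul]
  congr 1
  ring

/-- for `G = G(r,1,n)` with parameters `c₀` (transposition-type
reflections) and `c_1, …, c_{r−1}` (diagonal reflections `ζ_k^l`), setting
`d_j = Σ_{1≤l≤r−1} ζ^{lj} c_l` with `ζ = e^{2πi/r}`, the scalar `c_{λ•}` by which the
central element `Σ_{r∈R} c_r (1−r)` acts on the irreducible module `S^{λ•}` indexed by an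
`r`-tuple of partitions `λ•` with `n` boxes equals
`r·C(n,2)·c₀ + n·d₀ − Σ_{b∈λ•} (ct(b)·r·c₀ + d_{β(b)})`.

The module `S^{λ•}` and the central element are encoded through Young's orthonormal form
(the context): `v` is a (nonzero) basis vector `v_T` of `S^{λ•}` for a standard tableau
`T` recorded by `cont j = ct(T⁻¹(j+1))` and `beta j = β(T⁻¹(j+1))`; the operators
`phi j = φ_{j+1}` and `zmat j = ζ_{j+1}` act on `v` as in Young's form (`hphi`, `hzeta`);
and `Z` is the expression of the central element `Σ_{r∈R} c_r(1−r)` in terms of the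
`φ_j` and `ζ_j` (`hZ`). -/
theorem central_character_Gr1n (r n : ℕ) (hr : 0 < r)
    (lam : ℕ → List ℕ) (sz : ℕ → ℕ)
    (hpart : ∀ k < r, PaperIsPartition (lam k) (sz k))
    (hout : ∀ k, r ≤ k → lam k = [])
    (hn : ∑ k ∈ Finset.range r, sz k = n)
    (c0 : ℂ) (c : ℕ → ℂ)
    (ζ : ℂ) (hζ : ζ = Complex.exp (2 * Real.pi * Complex.I / r))
    (d : ℕ → ℂ) (hd : ∀ j, d j = ∑ l ∈ Finset.Ico 1 r, ζ ^ (l * j) * c l)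
    {W : Type*} [AddCommGroup W] [Module ℂ W]
    (v : W) (hv : v ≠ 0)
    (Z : Module.End ℂ W) (phi zmat : Fin n → Module.End ℂ W)
    (cont : Fin n → ℤ) (beta : Fin n → ℕ)
    (hbeta : ∀ j, beta j < r)
    (hZ : Z = (c0 * r * (n.choose 2 : ℂ)) • (1 : Module.End ℂ W)
        - c0 • ∑ j, phi j
        + ∑ j, ∑ l ∈ Finset.Ico 1 r, c l • ((1 : Module.End ℂ W) - (zmat j) ^ l))
    (hphi : ∀ j, phi j v = ((r : ℂ) * (cont j : ℂ)) • v)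
    (hzeta : ∀ j, zmat j v = ζ ^ (beta j) • v)
    (hcont : ∑ j, cont j = ∑ k ∈ Finset.range r, contentSum (lam k))
    (hbe : ∀ k < r, (Finset.univ.filter (fun j => beta j = k)).card = (lam k).sum) :
    Z v = ((r : ℂ) * (n.choose 2 : ℂ) * c0 + (n : ℂ) * d 0
      - ((∑ k ∈ Finset.range r, (contentSum (lam k) : ℂ)) * (r : ℂ) * c0
         + ∑ k ∈ Finset.range r, ((lam k).sum : ℂ) * d k)) • v :=
  central_character_Gr1n_general r n lam c0 c ζ d hd v Z phi zmat cont beta hbeta hZ hphi hzeta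
    hcont hbe
end

section
/- Let S̄ be a linear subspace of V, G a finite complex reflection group acting on V, and S the complement in S̄ of the reflecting hyperplanes not containing S̄. Let I_S ⊆ ℂ[V_S] be the ideal of S in the localization V_S = V ∖ ∪_{H∉𝒜_S} H, and let U be the span of the linear forms α_r for r ∈ R_S (reflections fixing S̄ pointwise). Then the canonical maps ℂ[S] ⊗ Sym^d U → gr^d_{I_S} ℂ[V_S] are vector space isomorphisms, giving an N_S-equivariant algebra isomorphism ℂ[S × S^⊥] → gr_{I_S} ℂ[V_S]. -/
open MvPolynomial

noncomputable section

/-!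
Write `MvPolynomial (σ ⊕ τ) R` as polynomials in the `τ`-variables over `MvPolynomial σ R`.
The ideal of `S` becomes the ideal of all variables, whose `d`-th power is spanned by the
monomials of degree `d` and consists of the polynomials without coefficients in degree `< d`.
For independence modulo `I^{d+1}`, clear denominators: if `u * ∑ r_m X^m ∈ I^{d+1}` with all
`m` of degree `d`, then the coefficient of `X^m` is `u(σ, 0) * r_m(σ, 0) = 0`. Since `u` is a
product of forms not vanishing on `S̄`, `u(σ, 0)` is a non-zero-divisor, so `r_m(σ, 0) = 0`,
i.e. `r_m ∈ I`.
-/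

theorem IsLocalization.mem_map_of_sum_mul_mem_map {R A ι : Type*} [CommSemiring R]
    [CommSemiring A] [Algebra R A] (M : Submonoid R) [IsLocalization M A] {J J' : Ideal R}
    {f : ι → R} {T : Finset ι}
    (h : ∀ u ∈ M, ∀ r : ι → R, u * ∑ i ∈ T, r i * f i ∈ J' → ∀ i ∈ T, r i ∈ J)
    {g : ι → A} (hg : ∑ i ∈ T, g i * algebraMap R A (f i) ∈ J'.map (algebraMap R A)) :
    ∀ i ∈ T, g i ∈ J.map (algebraMap R A) := by
  obtain ⟨b, hb⟩ := IsLocalization.exist_integer_multiples M T g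
  choose! r hr using hb
  have hsum : algebraMap R A (∑ i ∈ T, r i * f i)
      = algebraMap R A b * ∑ i ∈ T, g i * algebraMap R A (f i) := by
    rw [map_sum, Finset.mul_sum]
    refine Finset.sum_congr rfl fun i hi => ?_
    rw [map_mul, hr i hi, Algebra.smul_def, mul_assoc]
  obtain ⟨u, hu, hmem⟩ := (IsLocalization.algebraMap_mem_map_algebraMap_iff M A J' _).mp
    (hsum ▸ Ideal.mul_mem_left _ _ hg)
  intro i hi
  rw [← Ideal.unit_mul_mem_iff_mem _ (IsLocalization.map_units A b), ← Algebra.smul_def,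
    ← hr i hi]
  exact Ideal.mem_map_of_mem _ (h u hu r hmem i hi)

namespace MvPolynomial

variable {R σ τ : Type*} [CommSemiring R]

theorem mem_idealOfVars_iff_constantCoeff_eq_zero (p : MvPolynomial σ R) :
    p ∈ idealOfVars σ R ↔ constantCoeff p = 0 := by
  rw [← pow_one (idealOfVars σ R), mem_pow_idealOfVars_iff']
  simp [Finsupp.degree_eq_zero_iff, constantCoeff_eq]

theorem coeff_mul_monomial_of_degree_eq [DecidableEq σ] (p : MvPolynomial σ R)
    {m n : σ →₀ ℕ} (h : m.degree = n.degree) :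
    coeff n (p * monomial m 1) = if m = n then constantCoeff p else 0 := by
  rw [coeff_mul_monomial']
  by_cases hmn : m = n
  · simp [hmn, constantCoeff_eq]
  · rw [if_neg hmn, if_neg]
    intro hle
    obtain ⟨c, rfl⟩ := le_iff_exists_add.mp hle
    rw [map_add, left_eq_add, Finsupp.degree_eq_zero_iff] at h
    simp [h] at hmn

theorem mem_idealOfVars_of_mul_sum_mem_pow {u : MvPolynomial σ R}
    (hu : constantCoeff u ∈ nonZeroDivisors R) {d : ℕ} {T : Finset (σ →₀ ℕ)}
    (hT : ∀ m ∈ T, m.degree = d) {r : (σ →₀ ℕ) → MvPolynomial σ R}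
    (h : u * ∑ m ∈ T, r m * monomial m 1 ∈ idealOfVars σ R ^ (d + 1)) :
    ∀ m ∈ T, r m ∈ idealOfVars σ R := by
  classical
  intro m hm
  have hcoeff : coeff m (u * ∑ n ∈ T, r n * monomial n 1)
      = constantCoeff u * constantCoeff (r m) := by
    simp_rw [Finset.mul_sum, ← mul_assoc, coeff_sum]
    rw [Finset.sum_congr rfl fun n hn =>
      coeff_mul_monomial_of_degree_eq (u * r n) ((hT n hn).trans (hT m hm).symm),
      Finset.sum_ite_eq' T m, if_pos hm, map_mul]
  rw [mem_idealOfVars_iff_constantCoeff_eq_zero,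
    ← mul_left_mem_nonZeroDivisors_eq_zero_iff hu, ← hcoeff]
  exact (mem_pow_idealOfVars_iff' _ _).mp h m (by rw [hT m hm]; omega)

variable (R σ τ) in
abbrev idealOfInrVars : Ideal (MvPolynomial (σ ⊕ τ) R) :=
  Ideal.span (Set.range fun t : τ => X (Sum.inr t))

variable (R σ τ) in
def sumInrAlgEquiv : MvPolynomial (σ ⊕ τ) R ≃ₐ[R] MvPolynomial τ (MvPolynomial σ R) :=
  (renameEquiv R (Equiv.sumComm σ τ)).trans (sumAlgEquiv R τ σ)

@[simp]
theorem sumInrAlgEquiv_symm_X (t : τ) :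
    (sumInrAlgEquiv R σ τ).symm (X t) = X (Sum.inr t) := by
  simp [sumInrAlgEquiv, sumAlgEquiv_symm_X]

theorem sumInrAlgEquiv_symm_monomial (m : τ →₀ ℕ) :
    (sumInrAlgEquiv R σ τ).symm (monomial m 1) = monomial (m.mapDomain Sum.inr) 1 := by
  rw [monomial_eq, monomial_eq, C_1, C_1, one_mul, one_mul, map_finsuppProd,
    Finsupp.prod_mapDomain_index_inj Sum.inr_injective]
  simp only [map_pow, sumInrAlgEquiv_symm_X]

theorem sumInrAlgEquiv_monomial_mapDomain_inr (m : τ →₀ ℕ) :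
    sumInrAlgEquiv R σ τ (monomial (m.mapDomain Sum.inr) 1) = monomial m 1 := by
  rw [← sumInrAlgEquiv_symm_monomial, AlgEquiv.apply_symm_apply]

theorem constantCoeff_sumInrAlgEquiv (p : MvPolynomial (σ ⊕ τ) R) :
    constantCoeff (sumInrAlgEquiv R σ τ p) = aeval (Sum.elim X fun _ => 0) p := by
  induction p using MvPolynomial.induction_on with
  | C r => simp [sumInrAlgEquiv, sumAlgEquiv_C_inl]
  | add p q hp hq => simp only [map_add, hp, hq]
  | mul_X p i hp =>
    simp only [map_mul, hp]
    cases i <;> simp [sumInrAlgEquiv, sumAlgEquiv_X_inl, sumAlgEquiv_X_inr]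

theorem idealOfInrVars_eq_map :
    idealOfInrVars R σ τ
      = (idealOfVars τ (MvPolynomial σ R)).map (sumInrAlgEquiv R σ τ).symm := by
  rw [idealOfVars, Ideal.map_span, ← Set.range_comp]
  simp [Function.comp_def]

theorem span_range_map_X_inr {A : Type*} [CommSemiring A]
    (ψ : MvPolynomial (σ ⊕ τ) R →+* A) :
    Ideal.span (Set.range fun t : τ => ψ (X (Sum.inr t)))
      = (idealOfInrVars R σ τ).map ψ := by
  rw [Ideal.map_span, ← Set.range_comp]
  rfl

theorem span_range_map_X_inr_pow {A : Type*} [CommSemiring A]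
    (ψ : MvPolynomial (σ ⊕ τ) R →+* A) (d : ℕ) :
    Ideal.span (Set.range fun t : τ => ψ (X (Sum.inr t))) ^ d
      = Submodule.span A {x | ∃ m : τ →₀ ℕ, (m.sum fun _ e => e) = d ∧
          x = ψ (monomial (m.mapDomain Sum.inr) 1)} := by
  rw [span_range_map_X_inr, idealOfInrVars_eq_map, ← Ideal.map_pow, ← Ideal.map_pow,
    pow_idealOfVars_eq_span, Ideal.map_span, Ideal.map_span, Set.image_image, Set.image_image]
  congr 1
  ext x
  simp [sumInrAlgEquiv_symm_monomial, Finsupp.degree_apply, Finsupp.sum, eq_comm]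

theorem mem_idealOfInrVars_of_mul_sum_mem_pow {u : MvPolynomial (σ ⊕ τ) R}
    (hu : aeval (Sum.elim X fun _ => 0) u ∈ nonZeroDivisors (MvPolynomial σ R))
    {d : ℕ} {T : Finset (τ →₀ ℕ)} (hT : ∀ m ∈ T, (m.sum fun _ e => e) = d)
    {r : (τ →₀ ℕ) → MvPolynomial (σ ⊕ τ) R}
    (h : u * ∑ m ∈ T, r m * monomial (m.mapDomain Sum.inr) 1
      ∈ idealOfInrVars R σ τ ^ (d + 1)) :
    ∀ m ∈ T, r m ∈ idealOfInrVars R σ τ := by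
  have hmem {n : ℕ} (p : MvPolynomial (σ ⊕ τ) R) :
      p ∈ (idealOfVars τ (MvPolynomial σ R) ^ n).map (sumInrAlgEquiv R σ τ).symm ↔
        sumInrAlgEquiv R σ τ p ∈ idealOfVars τ (MvPolynomial σ R) ^ n :=
    Ideal.ext_iff.mp (Ideal.map_symm (sumInrAlgEquiv R σ τ).toRingEquiv) p
  rw [idealOfInrVars_eq_map, ← Ideal.map_pow, hmem] at h
  intro m hm
  rw [idealOfInrVars_eq_map, ← pow_one (Ideal.map _ _), ← Ideal.map_pow, hmem, pow_one]
  refine mem_idealOfVars_of_mul_sum_mem_pow (u := sumInrAlgEquiv R σ τ u) ?_ hT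
    (r := fun m => sumInrAlgEquiv R σ τ (r m)) ?_ m hm
  · rwa [constantCoeff_sumInrAlgEquiv]
  · simpa [sumInrAlgEquiv_monomial_mapDomain_inr] using h

end MvPolynomial

/-- The coordinates `σ` are those of `S̄` and `τ` those of `S^⊥`; `B` is the set of linear forms
`α_H` of the reflecting hyperplanes not containing `S̄`, so `ℂ[V_S]` is the localization at `B`
and `I_S` is generated by the `τ`-coordinates. The two conjuncts say that
`ℂ[S] ⊗ Sym^d U → gr^d_{I_S} ℂ[V_S]` is onto and injective. -/
theorem parabolic_degeneration_of_functions_general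
    {σ τ : Type*}
    (B : Finset (MvPolynomial (σ ⊕ τ) ℂ))
    (hB : ∀ p ∈ B, MvPolynomial.IsHomogeneous p 1 ∧
      (MvPolynomial.aeval (Sum.elim MvPolynomial.X fun _ => (0 : MvPolynomial σ ℂ))) p ≠ 0) :
    ∀ d : ℕ,
      ((Ideal.span (Set.range fun t : τ =>
          algebraMap (MvPolynomial (σ ⊕ τ) ℂ)
            (Localization (Submonoid.closure (B : Set (MvPolynomial (σ ⊕ τ) ℂ))))
            (X (Sum.inr t)))) ^ d
        = Submodule.span (Localization (Submonoid.closure (B : Set (MvPolynomial (σ ⊕ τ) ℂ))))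
            {x | ∃ m : τ →₀ ℕ, (m.sum fun _ e => e) = d ∧
              x = algebraMap (MvPolynomial (σ ⊕ τ) ℂ)
                (Localization (Submonoid.closure (B : Set (MvPolynomial (σ ⊕ τ) ℂ))))
                (monomial (m.mapDomain Sum.inr) (1 : ℂ))}) ∧
      ∀ g : (τ →₀ ℕ) →₀ Localization (Submonoid.closure (B : Set (MvPolynomial (σ ⊕ τ) ℂ))),
        (∀ m ∈ g.support, (m.sum fun _ e => e) = d) →
        (g.sum fun m x => x *
            algebraMap (MvPolynomial (σ ⊕ τ) ℂ)
              (Localization (Submonoid.closure (B : Set (MvPolynomial (σ ⊕ τ) ℂ))))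
              (monomial (m.mapDomain Sum.inr) (1 : ℂ)))
          ∈ (Ideal.span (Set.range fun t : τ =>
              algebraMap (MvPolynomial (σ ⊕ τ) ℂ)
                (Localization (Submonoid.closure (B : Set (MvPolynomial (σ ⊕ τ) ℂ))))
                (X (Sum.inr t)))) ^ (d + 1) →
        ∀ m : τ →₀ ℕ, g m ∈ (Ideal.span (Set.range fun t : τ =>
            algebraMap (MvPolynomial (σ ⊕ τ) ℂ)
              (Localization (Submonoid.closure (B : Set (MvPolynomial (σ ⊕ τ) ℂ))))
              (X (Sum.inr t)))) := by
  set M := Submonoid.closure (B : Set (MvPolynomial (σ ⊕ τ) ℂ))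
  have hM : M ≤ (nonZeroDivisors (MvPolynomial σ ℂ)).comap (aeval (Sum.elim X fun _ => 0)) :=
    Submonoid.closure_le.mpr fun p hp => mem_nonZeroDivisors_of_ne_zero (hB p hp).2
  intro d
  refine ⟨span_range_map_X_inr_pow _ d, fun g hg hmem m => ?_⟩
  rw [span_range_map_X_inr, ← Ideal.map_pow] at hmem
  rw [span_range_map_X_inr]
  by_cases hm : m ∈ g.support
  · exact IsLocalization.mem_map_of_sum_mul_mem_map M
      (fun u hu r => mem_idealOfInrVars_of_mul_sum_mem_pow (hM hu) hg) hmem m hm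
  · rw [Finsupp.notMem_support_iff.mp hm]
    exact zero_mem _

/-- let `V = S̄ ⊕ S^⊥` with coordinates `σ` on `S̄` and `τ` on `S^⊥`, let
`B` be the (finite) set of linear forms `α_H` for the reflecting hyperplanes `H` not
containing `S̄` (degree-one polynomials with nonzero restriction to `S̄`), let
`A = ℂ[V_S] = ℂ[V][B⁻¹]` and let `I_S ⊆ A` be the ideal of `S`, generated by the
`τ`-coordinates (the span `U` of the `α_r`, `r ∈ R_S`).  Then the canonical maps
`ℂ[S] ⊗ Sym^d U → gr^d_{I_S} ℂ[V_S]` are isomorphisms; concretely, for each `d` the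
monomials of degree `d` in the `τ`-variables generate `I_S^d` as an `A`-module and are
linearly independent over `ℂ[S] = A/I_S` modulo `I_S^{d+1}`, so that
`gr_{I_S} ℂ[V_S] ≅ ℂ[S] ⊗ ℂ[S^⊥] = ℂ[S × S^⊥]` as a graded algebra. -/
theorem parabolic_degeneration_of_functions
    {σ τ : Type*} [Finite σ] [Finite τ]
    (B : Finset (MvPolynomial (σ ⊕ τ) ℂ))
    (hB : ∀ p ∈ B, MvPolynomial.IsHomogeneous p 1 ∧
      (MvPolynomial.aeval (Sum.elim MvPolynomial.X fun _ => (0 : MvPolynomial σ ℂ))) p ≠ 0) :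
    ∀ d : ℕ,
      ((Ideal.span (Set.range fun t : τ =>
          algebraMap (MvPolynomial (σ ⊕ τ) ℂ)
            (Localization (Submonoid.closure (B : Set (MvPolynomial (σ ⊕ τ) ℂ))))
            (X (Sum.inr t)))) ^ d
        = Submodule.span (Localization (Submonoid.closure (B : Set (MvPolynomial (σ ⊕ τ) ℂ))))
            {x | ∃ m : τ →₀ ℕ, (m.sum fun _ e => e) = d ∧
              x = algebraMap (MvPolynomial (σ ⊕ τ) ℂ)
                (Localization (Submonoid.closure (B : Set (MvPolynomial (σ ⊕ τ) ℂ))))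
                (monomial (m.mapDomain Sum.inr) (1 : ℂ))}) ∧
      ∀ g : (τ →₀ ℕ) →₀ Localization (Submonoid.closure (B : Set (MvPolynomial (σ ⊕ τ) ℂ))),
        (∀ m ∈ g.support, (m.sum fun _ e => e) = d) →
        (g.sum fun m x => x *
            algebraMap (MvPolynomial (σ ⊕ τ) ℂ)
              (Localization (Submonoid.closure (B : Set (MvPolynomial (σ ⊕ τ) ℂ))))
              (monomial (m.mapDomain Sum.inr) (1 : ℂ)))
          ∈ (Ideal.span (Set.range fun t : τ =>
              algebraMap (MvPolynomial (σ ⊕ τ) ℂ)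
                (Localization (Submonoid.closure (B : Set (MvPolynomial (σ ⊕ τ) ℂ))))
                (X (Sum.inr t)))) ^ (d + 1) →
        ∀ m : τ →₀ ℕ, g m ∈ (Ideal.span (Set.range fun t : τ =>
            algebraMap (MvPolynomial (σ ⊕ τ) ℂ)
              (Localization (Submonoid.closure (B : Set (MvPolynomial (σ ⊕ τ) ℂ))))
              (X (Sum.inr t)))) :=
  parabolic_degeneration_of_functions_general B hB
end
end

section
/- Let G ⊆ GL(V) be a finite complex reflection group and S ⊆ V a stratum with pointwise stabilizer G_S and setwise stabilizer N_S = {g ∈ G : g(S) ⊆ S}. Then N_S equals the normalizer N_G(G_S) of G_S in G. -/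
/-- `g ∈ GL(V)` is a reflection: its fixed space has codimension exactly 1. -/
def IsLinReflection {V : Type*} [AddCommGroup V] [Module ℂ V]
    (g : (V →ₗ[ℂ] V)ˣ) : Prop :=
  Module.finrank ℂ (V ⧸ LinearMap.ker ((g : V →ₗ[ℂ] V) - LinearMap.id)) = 1

/-- The stratum through `p`: the set of points with the same stabilizer in `G` as `p`. -/
def stratumOf {V : Type*} [AddCommGroup V] [Module ℂ V]
    (G : Subgroup (V →ₗ[ℂ] V)ˣ) (p : V) : Set V :=
  {q | ∀ g : (V →ₗ[ℂ] V)ˣ, g ∈ G → ((g : V →ₗ[ℂ] V) q = q ↔ (g : V →ₗ[ℂ] V) p = p)}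

/-- let `G ⊆ GL(V)` be a finite complex reflection group and `S` the
stratum through `p`, with pointwise stabilizer `G_S = {g ∈ G : gq = q ∀q ∈ S}` and
setwise stabilizer `N_S = {g ∈ G : g(S) ⊆ S}`.  Then `N_S` equals the normalizer of
`G_S` in `G`, i.e. `{g ∈ G : ∀ x, x ∈ G_S ↔ g x g⁻¹ ∈ G_S}`. -/
theorem setwise_stabilizer_eq_normalizer {V : Type*} [AddCommGroup V] [Module ℂ V]
    [FiniteDimensional ℂ V]
    (G : Subgroup (V →ₗ[ℂ] V)ˣ) [Finite G]
    (hgen : Subgroup.closure {g : (V →ₗ[ℂ] V)ˣ | g ∈ G ∧ IsLinReflection g} = G)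
    (p : V) :
    {g : (V →ₗ[ℂ] V)ˣ | g ∈ G ∧
        ∀ q ∈ stratumOf G p, (g : V →ₗ[ℂ] V) q ∈ stratumOf G p}
      = {g : (V →ₗ[ℂ] V)ˣ | g ∈ G ∧
          ∀ x : (V →ₗ[ℂ] V)ˣ,
            ((x ∈ G ∧ ∀ q ∈ stratumOf G p, (x : V →ₗ[ℂ] V) q = q) ↔
              (g * x * g⁻¹ ∈ G ∧
                ∀ q ∈ stratumOf G p, ((g * x * g⁻¹ : (V →ₗ[ℂ] V)ˣ) : V →ₗ[ℂ] V) q = q))} := by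
  have hpS : p ∈ stratumOf G p := fun h hh => Iff.rfl
  -- for x ∈ G, fixing all of S is equivalent to fixing p
  have fixS : ∀ x : (V →ₗ[ℂ] V)ˣ, x ∈ G →
      ((∀ q ∈ stratumOf G p, (x : V →ₗ[ℂ] V) q = q) ↔ (x : V →ₗ[ℂ] V) p = p) := by
    intro x hx
    exact ⟨fun h => h p hpS, fun h q hq => (hq x hx).mpr h⟩
  have appmul : ∀ (a b : (V →ₗ[ℂ] V)ˣ) (v : V),
      ((a * b : (V →ₗ[ℂ] V)ˣ) : V →ₗ[ℂ] V) v = (a : V →ₗ[ℂ] V) ((b : V →ₗ[ℂ] V) v) := by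
    intro a b v; simp [Units.val_mul, Module.End.mul_apply]
  have cancel : ∀ (a : (V →ₗ[ℂ] V)ˣ) (v : V),
      ((a⁻¹ : (V →ₗ[ℂ] V)ˣ) : V →ₗ[ℂ] V) ((a : V →ₗ[ℂ] V) v) = v := by
    intro a v
    have := appmul a⁻¹ a v
    simpa using this.symm
  have cancel' : ∀ (a : (V →ₗ[ℂ] V)ˣ) (v : V),
      (a : V →ₗ[ℂ] V) (((a⁻¹ : (V →ₗ[ℂ] V)ˣ) : V →ₗ[ℂ] V) v) = v := by
    intro a v
    have := appmul a a⁻¹ v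
    simpa using this.symm
  ext g
  simp only [Set.mem_setOf_eq]
  constructor
  · rintro ⟨hg, hS⟩
    refine ⟨hg, fun x => ?_⟩
    have hgpS : (g : V →ₗ[ℂ] V) p ∈ stratumOf G p := hS p hpS
    constructor
    · rintro ⟨hx, hfix⟩
      have hxp : (x : V →ₗ[ℂ] V) p = p := hfix p hpS
      have hmem : g * x * g⁻¹ ∈ G := mul_mem (mul_mem hg hx) (inv_mem hg)
      refine ⟨hmem, ?_⟩
      rw [fixS _ hmem]
      -- g x g⁻¹ fixes g p ∈ S, hence fixes p
      have hfixgp : ((g * x * g⁻¹ : (V →ₗ[ℂ] V)ˣ) : V →ₗ[ℂ] V) ((g : V →ₗ[ℂ] V) p)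
          = (g : V →ₗ[ℂ] V) p := by
        rw [appmul, appmul, cancel, hxp]
      exact (hgpS _ hmem).mp hfixgp
    · rintro ⟨hmem, hfix⟩
      have hx : x ∈ G := by
        have h1 : g⁻¹ * (g * x * g⁻¹) * g ∈ G := mul_mem (mul_mem (inv_mem hg) hmem) hg
        have : g⁻¹ * (g * x * g⁻¹) * g = x := by group
        rwa [this] at h1
      refine ⟨hx, ?_⟩
      rw [fixS _ hx]
      -- g x g⁻¹ fixes g p, so x fixes p
      have hfixgp : ((g * x * g⁻¹ : (V →ₗ[ℂ] V)ˣ) : V →ₗ[ℂ] V) ((g : V →ₗ[ℂ] V) p)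
          = (g : V →ₗ[ℂ] V) p := hfix _ hgpS
      rw [appmul, appmul, cancel] at hfixgp
      have := congrArg ((g⁻¹ : (V →ₗ[ℂ] V)ˣ) : V →ₗ[ℂ] V) hfixgp
      rwa [cancel, cancel] at this
  · rintro ⟨hg, hnorm⟩
    refine ⟨hg, fun q hq => ?_⟩
    intro h hh
    set x : (V →ₗ[ℂ] V)ˣ := g⁻¹ * h * g with hxdef
    have hxG : x ∈ G := mul_mem (mul_mem (inv_mem hg) hh) hg
    have hgxg : g * x * g⁻¹ = h := by rw [hxdef]; group
    have step1 : (h : V →ₗ[ℂ] V) ((g : V →ₗ[ℂ] V) q) = (g : V →ₗ[ℂ] V) q ↔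
        (x : V →ₗ[ℂ] V) q = q := by
      constructor
      · intro hq'
        have := congrArg ((g⁻¹ : (V →ₗ[ℂ] V)ˣ) : V →ₗ[ℂ] V) hq'
        rw [cancel] at this
        rw [hxdef, appmul, appmul, this]
      · intro hq'
        have : (g : V →ₗ[ℂ] V) (((g⁻¹ * h * g : (V →ₗ[ℂ] V)ˣ) : V →ₗ[ℂ] V) q)
            = (g : V →ₗ[ℂ] V) q := by rw [← hxdef, hq']
        rw [appmul, appmul, cancel'] at this
        exact this
    rw [step1, hq x hxG, ← fixS x hxG]
    constructor
    · intro hxp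
      have := (hnorm x).mp ⟨hxG, hxp⟩
      have h2 := this.2
      rw [hgxg] at h2
      exact h2 p hpS
    · intro hp
      have : g * x * g⁻¹ ∈ G ∧ ∀ r ∈ stratumOf G p,
          ((g * x * g⁻¹ : (V →ₗ[ℂ] V)ˣ) : V →ₗ[ℂ] V) r = r := by
        rw [hgxg]
        exact ⟨hh, (fixS h hh).mpr hp⟩
      exact ((hnorm x).mpr this).2
end
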